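/- Let α > −1 be real, N ≥ 1, and let t_1, …, t_N be pairwise distinct positive reals. Then, as x = (x_1,…,x_N) tends to (0,…,0) through tuples of pairwise distinct positive reals, the ratio det_{1≤i,j≤N}[ J_α(t_j · x_i) ] / ( (∏_{k=1}^N x_k^α) · Δ(x²) ) converges to (−1)^{N(N−1)/2} · (∏_{k=1}^N t_k^α) · Δ(t²) · 2^{−αN − N(N−1)} / ∏_{j=1}^N ( (j−1)! · Γ(α+j) ). -/

import Mathlib

open Filter

/-- The Bessel function of the first kind, for `x > 0`,
`J_α(x) = Σ_{k=0}^∞ (-1)^k (x/2)^{2k+α} / (k! Γ(k+α+1))`. -/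
noncomputable def besselJ (α x : ℝ) : ℝ :=
  ∑' k : ℕ, (-1 : ℝ) ^ k * (x / 2) ^ (2 * (k : ℝ) + α) /
    ((Nat.factorial k : ℝ) * Real.Gamma ((k : ℝ) + α + 1))

/-- The Vandermonde product `Δ(x) = ∏_{1 ≤ j < k ≤ N} (x_k - x_j)`. -/
def vandermondeProd {N : ℕ} (x : Fin N → ℝ) : ℝ :=
  ∏ p ∈ Finset.univ.filter (fun p : Fin N × Fin N => p.1 < p.2), (x p.2 - x p.1)

/-!
Write `J_α(x) = (x/2)^α f(x²)` with `f(u) = Σ_k a_k u^k` entire, so that up to the factors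
`t_j^α (x_i/2)^α` the matrix is `[f_j(u_i)]` with `u_i = x_i²` and `f_j(u) = f(t_j² u)`.
Left multiplication by the matrix whose row `i` takes the divided difference over the nodes
`u_0, …, u_i` turns the Vandermonde matrix into a unitriangular one, so
`det [f_j(u_i)] / Δ(u) = det [f_j[u_0, …, u_i]]`. The divided difference of `u^(k+m)` over
`m + 1` nodes is the complete homogeneous polynomial of degree `k`, so `f_j[u_0, …, u_i]`
extends continuously to `u = 0` with value `a_i t_j^(2i)`, and the limit is
`det [a_i t_j^(2i)] = (∏ a_i) Δ(t²)`.
-/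

open Finset Function Matrix Topology
open scoped Nat

section CompleteHomogeneous

variable {R : Type*} [CommRing R]

def completeHomogeneous : (n : ℕ) → ℕ → (Fin n → R) → R
  | 0, d, _ => if d = 0 then 1 else 0
  | n + 1, d, u => ∑ p ∈ antidiagonal d, u 0 ^ p.1 * completeHomogeneous n p.2 (Fin.tail u)

theorem completeHomogeneous_zero (n d : ℕ) :
    completeHomogeneous n d (0 : Fin n → R) = if d = 0 then 1 else 0 := by
  induction n generalizing d with
  | zero => rfl
  | succ n ih =>
    have htail : Fin.tail (0 : Fin (n + 1) → R) = 0 := rfl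
    simp [completeHomogeneous, htail, ih, Finset.Nat.sum_antidiagonal_eq_sum_range_succ_mk,
      zero_pow_eq, sum_range_succ']

theorem completeHomogeneous_one (u : Fin 1 → R) (k : ℕ) : completeHomogeneous 1 k u = u 0 ^ k := by
  rw [completeHomogeneous, sum_eq_single (k, 0)]
  · simp [completeHomogeneous]
  · rintro ⟨a, b⟩ hab hne
    have hb : b ≠ 0 := by rintro rfl; simp_all
    simp [completeHomogeneous, hb]
  · simp

theorem continuous_completeHomogeneous [TopologicalSpace R] [IsTopologicalRing R] (n d : ℕ) :
    Continuous (completeHomogeneous (R := R) n d) := by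
  induction n generalizing d with
  | zero => exact continuous_const
  | succ n ih =>
    exact continuous_finsetSum _ fun p _ => ((continuous_apply 0).pow _).mul
      ((ih p.2).comp (continuous_pi fun i => continuous_apply i.succ))

end CompleteHomogeneous

theorem abs_completeHomogeneous_le {n : ℕ} (d : ℕ) {u : Fin n → ℝ} (hu : ∀ i, |u i| ≤ 1 / 2) :
    |completeHomogeneous n d u| ≤ 2 ^ n := by
  induction n generalizing d with
  | zero => unfold completeHomogeneous; split_ifs <;> simp
  | succ n ih =>
    calc |completeHomogeneous (n + 1) d u|
        ≤ ∑ p ∈ antidiagonal d, (1 / 2 : ℝ) ^ p.1 * 2 ^ n := by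
          refine (abs_sum_le_sum_abs _ _).trans (sum_le_sum fun p _ => ?_)
          rw [abs_mul, abs_pow]
          gcongr
          · exact hu 0
          · exact ih _ fun i => hu i.succ
      _ = (∑ a ∈ range (d + 1), (1 / 2 : ℝ) ^ a) * 2 ^ n := by
          rw [Finset.Nat.sum_antidiagonal_eq_sum_range_succ (fun a _ => (1 / 2 : ℝ) ^ a * 2 ^ n),
            sum_mul]
      _ ≤ 2 * 2 ^ n := by gcongr; exact sum_geometric_two_le _
      _ = 2 ^ (n + 1) := by ring

section DividedDifference

variable {K : Type*} [Field K]

def lagrangeWeight {n : ℕ} (u : Fin n → K) (i : Fin n) : K :=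
  ∏ j ∈ univ.erase i, (u i - u j)⁻¹

def divDiff {n : ℕ} (f : K → K) (u : Fin n → K) : K :=
  ∑ i, f (u i) * lagrangeWeight u i

theorem coeff_lagrangeBasis {n : ℕ} {u : Fin n → K} (hu : Injective u) (i : Fin n) :
    (Lagrange.basis univ u i).coeff (n - 1) = lagrangeWeight u i := by
  have hdeg : (Lagrange.basis univ u i).natDegree = n - 1 := by
    rw [Lagrange.natDegree_basis hu.injOn (mem_univ i), card_univ, Fintype.card_fin]
  rw [← hdeg, Polynomial.coeff_natDegree, Lagrange.basis, Polynomial.leadingCoeff_prod]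
  refine prod_congr rfl fun j _ => ?_
  rw [Lagrange.basisDivisor, Polynomial.leadingCoeff_mul, Polynomial.leadingCoeff_C,
    (Polynomial.monic_X_sub_C _).leadingCoeff, mul_one]

/-- Compare the coefficients of `X ^ (n - 1)` in the Lagrange interpolation of `X ^ k`. -/
theorem divDiff_pow_of_lt {n k : ℕ} {u : Fin n → K} (hu : Injective u) (hk : k < n) :
    divDiff (· ^ k) u = if k = n - 1 then 1 else 0 := by
  have hdeg : (Polynomial.X ^ k : Polynomial K).degree < (univ : Finset (Fin n)).card := by
    rw [Polynomial.degree_X_pow, card_univ, Fintype.card_fin]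
    exact_mod_cast hk
  have h := congrArg (Polynomial.coeff · (n - 1)) (Lagrange.eq_interpolate hu.injOn hdeg)
  simp only [Lagrange.interpolate_apply, Polynomial.coeff_X_pow, Polynomial.finsetSum_coeff,
    Polynomial.coeff_C_mul, coeff_lagrangeBasis hu, Polynomial.eval_pow,
    Polynomial.eval_X] at h
  rw [divDiff, ← h]
  exact if_congr eq_comm rfl rfl

theorem Fin.prod_erase_succ {M : Type*} [CommMonoid M] {n : ℕ} (g : Fin (n + 1) → M) (i : Fin n) :
    ∏ j ∈ univ.erase i.succ, g j = g 0 * ∏ j ∈ univ.erase i, g j.succ := by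
  simp only [← filter_ne', prod_filter, Fin.prod_univ_succ, ne_eq, Fin.succ_inj,
    (Fin.succ_ne_zero i).symm, not_false_eq_true, if_true]

theorem lagrangeWeight_succ {n : ℕ} (u : Fin (n + 1) → K) (i : Fin n) :
    lagrangeWeight u i.succ = (u i.succ - u 0)⁻¹ * lagrangeWeight (Fin.tail u) i :=
  Fin.prod_erase_succ (fun j => (u i.succ - u j)⁻¹) i

/-- Since the weights sum to zero, `x ^ k` may be replaced by `x ^ k - u 0 ^ k`, whose quotient by
`x - u 0` is a geometric sum. -/
theorem divDiff_pow_eq_sum {m : ℕ} {u : Fin (m + 2) → K} (hu : Injective u) (k : ℕ) :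
    divDiff (· ^ k) u = ∑ t ∈ range k, u 0 ^ t * divDiff (· ^ (k - 1 - t)) (Fin.tail u) := by
  have hsum : ∑ i, lagrangeWeight u i = 0 := by
    simpa [divDiff] using divDiff_pow_of_lt hu (k := 0) (by omega)
  have hgeom : ∀ i : Fin (m + 1), (u i.succ ^ k - u 0 ^ k) * (u i.succ - u 0)⁻¹ =
      ∑ t ∈ range k, u 0 ^ t * u i.succ ^ (k - 1 - t) := by
    intro i
    have hne : u i.succ - u 0 ≠ 0 := sub_ne_zero.2 (hu.ne (Fin.succ_ne_zero i))
    rw [mul_inv_eq_iff_eq_mul₀ hne]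
    linear_combination (geom_sum₂_mul (u 0) (u i.succ) k)
  calc divDiff (· ^ k) u = ∑ i, (u i ^ k - u 0 ^ k) * lagrangeWeight u i := by
        simp only [divDiff, sub_mul, sum_sub_distrib, ← mul_sum, hsum, mul_zero, sub_zero]
    _ = ∑ i : Fin (m + 1), (u i.succ ^ k - u 0 ^ k) * lagrangeWeight u i.succ := by
        rw [Fin.sum_univ_succ, sub_self, zero_mul, zero_add]
    _ = _ := by
        simp only [lagrangeWeight_succ, ← mul_assoc, hgeom, sum_mul, divDiff, mul_sum]
        rw [sum_comm]
        simp only [Fin.tail, mul_assoc]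

theorem divDiff_pow_add {m : ℕ} {u : Fin (m + 1) → K} (hu : Injective u) (k : ℕ) :
    divDiff (· ^ (k + m)) u = completeHomogeneous (m + 1) k u := by
  induction m generalizing k with
  | zero =>
    rw [completeHomogeneous_one]
    simp [divDiff, lagrangeWeight]
  | succ m ih =>
    have htail : Injective (Fin.tail u) := fun a b h => Fin.succ_injective _ (hu h)
    have hlow : ∀ x ∈ range m, u 0 ^ (k + 1 + x) *
        divDiff (· ^ (k + 1 + m - 1 - (k + 1 + x))) (Fin.tail u) = 0 := fun x hx => by
      rw [divDiff_pow_of_lt htail (by omega), if_neg (by simp at hx; omega), mul_zero]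
    have hhigh : ∀ t ∈ range (k + 1), u 0 ^ t * divDiff (· ^ (k + 1 + m - 1 - t)) (Fin.tail u) =
        u 0 ^ t * completeHomogeneous (m + 1) (k - t) (Fin.tail u) := fun t ht => by
      rw [← ih htail, show k + 1 + m - 1 - t = k - t + m by simp at ht; omega]
    rw [divDiff_pow_eq_sum hu, show k + (m + 1) = k + 1 + m by ring, sum_range_add,
      sum_eq_zero hlow, add_zero, sum_congr rfl hhigh, completeHomogeneous,
      Finset.Nat.sum_antidiagonal_eq_sum_range_succ
        (fun a b => u 0 ^ a * completeHomogeneous (m + 1) b (Fin.tail u))]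

end DividedDifference

theorem hasSum_divDiff_pow {n : ℕ} (c : ℕ → ℝ) {u : Fin n → ℝ}
    (hs : ∀ i, Summable fun k => c k * u i ^ k) :
    HasSum (fun k => c k * divDiff (· ^ k) u) (divDiff (fun x => ∑' k, c k * x ^ k) u) := by
  simp only [divDiff, mul_sum, ← mul_assoc]
  exact hasSum_sum fun i _ => (hs i).hasSum.mul_right _

theorem divDiff_tsum_eq_tsum_completeHomogeneous {m : ℕ} (c : ℕ → ℝ) {u : Fin (m + 1) → ℝ}
    (hu : Injective u) (hs : ∀ i, Summable fun k => c k * u i ^ k) :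
    divDiff (fun x => ∑' k, c k * x ^ k) u = ∑' k, c (k + m) * completeHomogeneous (m + 1) k u := by
  have h := hasSum_divDiff_pow c hs
  rw [← h.tsum_eq, ← h.summable.sum_add_tsum_nat_add m]
  have hlow : ∀ k ∈ range m, c k * divDiff (· ^ k) u = 0 := fun k hk => by
    rw [divDiff_pow_of_lt hu (by simp at hk; omega), if_neg (by simp at hk; omega), mul_zero]
  simp only [sum_eq_zero hlow, zero_add, divDiff_pow_add hu]

theorem tendsto_tsum_completeHomogeneous {n : ℕ} (c : ℕ → ℝ) (hc : Summable fun k => |c k|) :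
    Tendsto (fun w : Fin n → ℝ => ∑' k, c k * completeHomogeneous n k w) (𝓝 0) (𝓝 (c 0)) := by
  have hcont : ContinuousOn (fun w : Fin n → ℝ => ∑' k, c k * completeHomogeneous n k w)
      (Metric.closedBall 0 (1 / 2)) := by
    refine continuousOn_tsum (fun k => (continuous_const.mul
      (continuous_completeHomogeneous n k)).continuousOn) (hc.mul_right (2 ^ n)) fun k w hw => ?_
    rw [Real.norm_eq_abs, abs_mul]
    gcongr
    refine abs_completeHomogeneous_le k fun i => (norm_le_pi_norm w i).trans ?_
    simpa using hw
  have hval : ∑' k, c k * completeHomogeneous n k (0 : Fin n → ℝ) = c 0 := by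
    rw [tsum_eq_single 0 fun k hk => by rw [completeHomogeneous_zero, if_neg hk, mul_zero],
      completeHomogeneous_zero, if_pos rfl, mul_one]
  simpa only [hval] using
    (hcont.continuousAt (Metric.closedBall_mem_nhds 0 one_half_pos)).tendsto

section DivDiffMatrix

variable {K : Type*} [Field K] {N : ℕ}

/-- Row `i` takes divided differences over the first `i + 1` nodes. -/
def divDiffMatrix (u : Fin N → K) : Matrix (Fin N) (Fin N) K :=
  of fun i l => ∑ p : Fin (i + 1),
    if Fin.castLE i.isLt p = l then lagrangeWeight (u ∘ Fin.castLE i.isLt) p else 0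

theorem divDiffMatrix_mul_apply (u : Fin N → K) (f : Fin N → K → K) (i j : Fin N) :
    (divDiffMatrix u * of fun l j => f j (u l)) i j = divDiff (f j) (u ∘ Fin.castLE i.isLt) := by
  simp only [divDiffMatrix, mul_apply, of_apply, sum_mul, ite_mul, zero_mul]
  rw [sum_comm]
  simp only [sum_ite_eq, mem_univ, if_true, divDiff, Function.comp_apply]
  exact sum_congr rfl fun p _ => mul_comm _ _

theorem det_divDiffMatrix_mul_vandermonde {u : Fin N → K} (hu : Injective u) :
    (divDiffMatrix u * vandermonde u).det = 1 := by
  have hentry : ∀ i j : Fin N, (divDiffMatrix u * vandermonde u) i j =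
      divDiff (· ^ (j : ℕ)) (u ∘ Fin.castLE i.isLt) :=
    divDiffMatrix_mul_apply u fun j x => x ^ (j : ℕ)
  have hwin : ∀ i : Fin N, Injective (u ∘ Fin.castLE i.isLt) :=
    fun i => hu.comp (Fin.castLE_injective _)
  rw [det_of_isUpperTriangular]
  · refine prod_eq_one fun i _ => ?_
    rw [hentry, divDiff_pow_of_lt (hwin i) (by omega), if_pos (by simp)]
  · intro i j (hji : j < i)
    rw [hentry, divDiff_pow_of_lt (hwin i) (by simp; omega), if_neg (by simp; omega)]

theorem det_div_det_vandermonde {u : Fin N → K} (hu : Injective u) (M : Matrix (Fin N) (Fin N) K) :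
    M.det / (vandermonde u).det = (divDiffMatrix u * M).det := by
  have h := det_divDiffMatrix_mul_vandermonde hu
  rw [det_mul] at h ⊢
  rw [eq_inv_of_mul_eq_one_left h, inv_mul_eq_div]

end DivDiffMatrix

theorem vandermondeProd_eq_det {N : ℕ} (v : Fin N → ℝ) : vandermondeProd v = (vandermonde v).det := by
  rw [vandermondeProd, det_vandermonde, prod_filter, Fintype.prod_prod_type]
  simp only [← prod_filter, filter_lt_eq_Ioi]

theorem tendsto_det_tsum_div_vandermondeProd {N : ℕ} (c : Fin N → ℕ → ℝ)
    (hc : ∀ j R, Summable fun k => |c j k| * R ^ k) :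
    Tendsto (fun u : Fin N → ℝ => (of fun i j => ∑' k, c j k * u i ^ k).det / vandermondeProd u)
      (𝓝[{u | Injective u}] 0) (𝓝 (of fun i j : Fin N => c j i).det) := by
  have hs : ∀ j (x : ℝ), Summable fun k => c j k * x ^ k := fun j x =>
    .of_norm (by simpa [abs_mul, abs_pow] using hc j |x|)
  have habs : ∀ j, Summable fun k => |c j k| := fun j => by simpa using hc j 1
  have hE : Tendsto (fun u : Fin N → ℝ => of fun i j : Fin N =>
      ∑' k, c j (k + i) * completeHomogeneous (i + 1) k (u ∘ Fin.castLE i.isLt))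
      (𝓝 0) (𝓝 (of fun i j : Fin N => c j i)) := by
    refine tendsto_pi_nhds.2 fun i => tendsto_pi_nhds.2 fun j => ?_
    have hwin : Tendsto (fun u : Fin N → ℝ => u ∘ Fin.castLE i.isLt) (𝓝 0) (𝓝 0) :=
      (continuous_pi fun p => continuous_apply _).tendsto' 0 0 rfl
    have h := (tendsto_tsum_completeHomogeneous (n := i + 1) (fun k => c j (k + i))
      ((summable_nat_add_iff i).2 (habs j))).comp hwin
    rwa [zero_add] at h
  refine Tendsto.congr' ?_ (((continuous_id.matrix_det).tendsto _).comp hE |>.mono_left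
    nhdsWithin_le_nhds)
  filter_upwards [self_mem_nhdsWithin] with u (hu : Injective u)
  rw [Function.comp_apply, vandermondeProd_eq_det, det_div_det_vandermonde hu]
  congr 1
  ext i j
  rw [divDiffMatrix_mul_apply u (fun j x => ∑' k, c j k * x ^ k),
    divDiff_tsum_eq_tsum_completeHomogeneous _ (hu.comp (Fin.castLE_injective _)) fun p => hs j _]
  rfl

theorem det_of_mul_pow {R : Type*} [CommRing R] {N : ℕ} (a v : Fin N → R) :
    (of fun i j : Fin N => a i * v j ^ (i : ℕ)).det = (∏ i, a i) * (vandermonde v).det := by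
  rw [← det_transpose (vandermonde v), ← det_mul_column]
  rfl

theorem tendsto_sq_nhdsWithin_injective {N : ℕ} :
    Tendsto (fun x : Fin N → ℝ => fun i => x i ^ 2) (𝓝[{x | Injective x ∧ ∀ i, 0 < x i}] 0)
      (𝓝[{u | Injective u}] 0) := by
  refine tendsto_nhdsWithin_iff.2 ⟨?_, ?_⟩
  · exact ((continuous_pi fun i => (continuous_apply i).pow 2).tendsto' 0 0
      (by ext; simp)).mono_left nhdsWithin_le_nhds
  · filter_upwards [self_mem_nhdsWithin] with x ⟨hinj, hpos⟩ i j hij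
    exact hinj ((sq_eq_sq₀ (hpos i).le (hpos j).le).1 hij)

noncomputable def besselCoeff (α : ℝ) (k : ℕ) : ℝ :=
  (-1) ^ k / (4 ^ k * k ! * Real.Gamma (α + k + 1))

theorem besselJ_eq_rpow_mul_tsum (α : ℝ) {x : ℝ} (hx : 0 < x) :
    besselJ α x = (x / 2) ^ α * ∑' k, besselCoeff α k * (x ^ 2) ^ k := by
  rw [besselJ, ← tsum_mul_left]
  refine tsum_congr fun k => ?_
  have h2k : (x / 2) ^ (2 * (k : ℝ) + α) = (x ^ 2) ^ k / 4 ^ k * (x / 2) ^ α := by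
    rw [Real.rpow_add (by positivity), show 2 * (k : ℝ) = ((2 * k : ℕ) : ℝ) by push_cast; ring,
      Real.rpow_natCast, pow_mul, div_pow, div_pow]
    norm_num
  rw [h2k, besselCoeff, add_comm (k : ℝ) α]
  ring

theorem summable_besselCoeff (α R : ℝ) : Summable fun k => |besselCoeff α k| * R ^ k := by
  refine .of_norm_bounded_eventually (Real.summable_pow_div_factorial (|R| / 4)) ?_
  rw [Nat.cofinite_eq_atTop]
  filter_upwards [eventually_ge_atTop ⌈1 - α⌉₊] with k hk
  have hΓ : 1 ≤ Real.Gamma (α + k + 1) := by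
    have h2 : (2 : ℝ) ≤ α + k + 1 := by linarith [Nat.ceil_le.1 hk]
    simpa [Real.Gamma_two] using Real.Gamma_strictMonoOn_Ici.monotoneOn Set.self_mem_Ici h2 h2
  have hnorm : ‖|besselCoeff α k| * R ^ k‖ = (|R| / 4) ^ k / k ! * (Real.Gamma (α + k + 1))⁻¹ := by
    have hpos : 0 < 4 ^ k * (k ! : ℝ) * Real.Gamma (α + k + 1) := by positivity
    simp only [Real.norm_eq_abs, abs_mul, abs_pow, besselCoeff, abs_div, abs_neg, abs_one,
      one_pow, abs_of_pos hpos, div_pow]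
    ring
  rw [hnorm]
  exact mul_le_of_le_one_right (by positivity) (inv_le_one_of_one_le₀ hΓ)

theorem prod_besselCoeff (α : ℝ) (N : ℕ) :
    ∏ i : Fin N, besselCoeff α i = (-1) ^ (N * (N - 1) / 2) /
      (2 ^ (N * (N - 1)) * ∏ j : Fin N, ((j : ℕ) ! * Real.Gamma (α + (j : ℕ) + 1))) := by
  simp only [besselCoeff, prod_div_distrib, prod_mul_distrib, prod_pow_eq_pow_sum,
    Fin.sum_univ_eq_sum_range (fun i => i), ← sum_range_id_mul_two, pow_mul']
  rw [Nat.mul_div_cancel _ two_pos, show (2 : ℝ) ^ 2 = 4 by norm_num, mul_assoc]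

theorem det_besselJ {N : ℕ} (α : ℝ) {t x : Fin N → ℝ} (ht : ∀ j, 0 < t j) (hx : ∀ i, 0 < x i) :
    (of fun i j => besselJ α (t j * x i)).det = (∏ j, t j ^ α) * ((∏ i, x i ^ α) / (2 ^ α) ^ N *
      (of fun i j => ∑' k, besselCoeff α k * (t j ^ 2) ^ k * (x i ^ 2) ^ k).det) := by
  set S : Matrix (Fin N) (Fin N) ℝ := of fun i j => ∑' k, besselCoeff α k * (t j ^ 2) ^ k * (x i ^ 2) ^ k
  have hentry : (of fun i j => besselJ α (t j * x i)) =
      of fun i j => t j ^ α * (x i ^ α / 2 ^ α * S i j) := by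
    ext i j
    rw [of_apply, besselJ_eq_rpow_mul_tsum α (mul_pos (ht j) (hx i)), mul_div_assoc,
      Real.mul_rpow (ht j).le (by linarith [hx i]), Real.div_rpow (hx i).le zero_le_two]
    simp only [S, of_apply, mul_pow, mul_assoc]
  have hprod : ∏ i, x i ^ α / 2 ^ α = (∏ i, x i ^ α) / (2 ^ α) ^ N := by
    rw [prod_div_distrib, prod_const, card_univ, Fintype.card_fin]
  rw [hentry, ← hprod]
  exact (det_mul_row (fun j => t j ^ α) (of fun i j => x i ^ α / 2 ^ α * S i j)).trans
    (congrArg _ (det_mul_column (fun i => x i ^ α / 2 ^ α) S))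

theorem stmt_5_general (α : ℝ) (N : ℕ)
    (t : Fin N → ℝ) (htpos : ∀ i, 0 < t i) :
    Filter.Tendsto
      (fun x : Fin N → ℝ =>
        (Matrix.of fun i j : Fin N => besselJ α (t j * x i)).det /
          ((∏ k : Fin N, (x k) ^ α) * vandermondeProd (fun k : Fin N => (x k) ^ 2)))
      (nhdsWithin 0 {x : Fin N → ℝ | Function.Injective x ∧ ∀ i, 0 < x i})
      (nhds ((-1 : ℝ) ^ (N * (N - 1) / 2) * (∏ k : Fin N, (t k) ^ α) *
        vandermondeProd (fun k : Fin N => (t k) ^ 2) *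
        (2 : ℝ) ^ (-(α * (N : ℝ)) - (N : ℝ) * ((N : ℝ) - 1)) /
          ∏ j : Fin N, ((Nat.factorial (j : ℕ) : ℝ) * Real.Gamma (α + (j : ℕ) + 1)))) := by
  have hc : ∀ j R, Summable fun k => |besselCoeff α k * (t j ^ 2) ^ k| * R ^ k := fun j R =>
    (summable_besselCoeff α (t j ^ 2 * R)).congr fun k => by
      rw [abs_mul, abs_pow, abs_of_nonneg (sq_nonneg (t j)), mul_pow, mul_assoc]
  have hlim := ((tendsto_det_tsum_div_vandermondeProd _ hc).comp
    tendsto_sq_nhdsWithin_injective).const_mul ((∏ j, t j ^ α) / (2 ^ α) ^ N)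
  have hpow : (2 : ℝ) ^ (-(α * (N : ℝ)) - (N : ℝ) * ((N : ℝ) - 1)) =
      1 / ((2 ^ α) ^ N * 2 ^ (N * (N - 1))) := by
    have hcast : ((N * (N - 1) : ℕ) : ℝ) = N * (N - 1) := by cases N <;> simp
    rw [Real.rpow_sub two_pos, Real.rpow_neg zero_le_two, Real.rpow_mul_natCast zero_le_two,
      ← hcast, Real.rpow_natCast]
    field_simp
  convert hlim.congr' ?_ using 2
  · rw [det_of_mul_pow (fun i => besselCoeff α i) (fun j => t j ^ 2), prod_besselCoeff, ← vandermondeProd_eq_det, hpow]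
    field_simp
  · filter_upwards [self_mem_nhdsWithin] with x ⟨_, hx⟩
    have hxα : ∏ k, x k ^ α ≠ 0 := prod_ne_zero_iff.2 fun k _ => (Real.rpow_pos_of_pos (hx k) α).ne'
    rw [Function.comp_apply, det_besselJ α htpos hx]
    field_simp

theorem stmt_5 (α : ℝ) (hα : -1 < α) (N : ℕ) (hN : 1 ≤ N)
    (t : Fin N → ℝ) (htinj : Function.Injective t) (htpos : ∀ i, 0 < t i) :
    Filter.Tendsto
      (fun x : Fin N → ℝ =>
        (Matrix.of fun i j : Fin N => besselJ α (t j * x i)).det /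
          ((∏ k : Fin N, (x k) ^ α) * vandermondeProd (fun k : Fin N => (x k) ^ 2)))
      (nhdsWithin 0 {x : Fin N → ℝ | Function.Injective x ∧ ∀ i, 0 < x i})
      (nhds ((-1 : ℝ) ^ (N * (N - 1) / 2) * (∏ k : Fin N, (t k) ^ α) *
        vandermondeProd (fun k : Fin N => (t k) ^ 2) *
        (2 : ℝ) ^ (-(α * (N : ℝ)) - (N : ℝ) * ((N : ℝ) - 1)) /
          ∏ j : Fin N, ((Nat.factorial (j : ℕ) : ℝ) * Real.Gamma (α + (j : ℕ) + 1)))) :=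
  stmt_5_general α N t htpos
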